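/- Let (B, δ, [−,−]) be a dg Lie algebra with an auxiliary grading T: B = ⊕_{k≥0} B^{(k)} such that δ preserves T and [B^{(i)}, B^{(j)}] ⊆ B^{(i+j+1)} (or more generally the bracket raises T-degree of at least one factor). Suppose there is a degree-(-1) operator δ^{-1} with 1 − [δ, δ^{-1}] = projection onto a subspace of cycles, and suppose H²(B,δ) vanishes in the relevant bidegree. Given an initial element η ∈ B¹ with δη = 0, T(η) = 0, there exists a unique J = Σ_{k≥0} J_{(k)} ∈ B¹ with J_{(0)} = η, δJ + (1/2)[J,J] = 0, and δ^{-1}J = 0, provided additionally that H¹(B,δ) in the relevant weight is spanned by η (which has T-degree 0). -/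
import Mathlib

noncomputable def fedosovSeq {L M : Type*} [AddCommGroup L] [Module ℂ L]
    [AddCommGroup M] [Module ℂ M]
    (δinv : M →ₗ[ℂ] L) (br : L →ₗ[ℂ] L →ₗ[ℂ] M) (η : L) : ℕ → L
  | 0 => η
  | n + 1 => (-(1/2) : ℂ) • δinv (∑ i ∈ (Finset.range (n+1)).attach,
      br (fedosovSeq δinv br η i.1) (fedosovSeq δinv br η (n - i.1)))
decreasing_by
  all_goals (have h := Finset.mem_range.mp i.2; omega)

lemma fedosovSeq_zero {L M : Type*} [AddCommGroup L] [Module ℂ L]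
    [AddCommGroup M] [Module ℂ M]
    (δinv : M →ₗ[ℂ] L) (br : L →ₗ[ℂ] L →ₗ[ℂ] M) (η : L) :
    fedosovSeq δinv br η 0 = η := by rw [fedosovSeq]

lemma fedosovSeq_succ {L M : Type*} [AddCommGroup L] [Module ℂ L]
    [AddCommGroup M] [Module ℂ M]
    (δinv : M →ₗ[ℂ] L) (br : L →ₗ[ℂ] L →ₗ[ℂ] M) (η : L) (n : ℕ) :
    fedosovSeq δinv br η (n+1) = (-(1/2) : ℂ) • δinv (∑ i ∈ Finset.range (n+1),
      br (fedosovSeq δinv br η i) (fedosovSeq δinv br η (n - i))) := by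
  rw [fedosovSeq, Finset.sum_attach (Finset.range (n+1))
    (fun i => br (fedosovSeq δinv br η i) (fedosovSeq δinv br η (n - i)))]


/-!
STATEMENT 19 (abstract Fedosov-type iteration): Let `(B, δ, [−,−])` be a dg Lie algebra
with an auxiliary grading `T` such that `δ` preserves `T` and the bracket raises the
`T`-degree by one, equipped with a degree-(−1) operator `δ⁻¹` such that
`1 − [δ, δ⁻¹]` is the projection onto harmonic elements.  Suppose `H²` vanishes in the
relevant bidegree and `H¹` in the relevant weight is spanned by an element `η` of
`T`-degree 0 with `δη = 0`.  Then there exists a unique `J = Σ_{k≥0} J_{(k)} ∈ B¹` with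
`J_{(0)} = η`, `δJ + (1/2)[J,J] = 0` and `δ⁻¹J = 0`.

Formalization: `K0, L, M, N` are the (conformal-weight-relevant) pieces of `B` in
cohomological degrees 0, 1, 2, 3.  The `T`-grading is encoded by families of commuting
idempotent projections (`πK, πL, πM, πN`) which separate points, with `L` complete
(every family of `T`-homogeneous components is realized).  The differential is
`δ0 : K0 → L`, `δ : L → M`, `δ' : M → N`; the bracket of two degree-1 elements is
`br : L → L → M` (symmetric on odd elements), and `br2 : M → L → N` is the bracket of a
degree-2 with a degree-1 element, related by the Leibniz rule and the Jacobi identity.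
`δinv : M → L` and `δinv1 : L → K0` are the components of `δ⁻¹`, `P : L → L` is the
harmonic projection with range spanned by `η`.
-/
theorem fedosov_iteration
    {K0 L M N : Type*}
    [AddCommGroup K0] [Module ℂ K0] [AddCommGroup L] [Module ℂ L]
    [AddCommGroup M] [Module ℂ M] [AddCommGroup N] [Module ℂ N]
    (πK : ℕ → (K0 →ₗ[ℂ] K0)) (πL : ℕ → (L →ₗ[ℂ] L))
    (πM : ℕ → (M →ₗ[ℂ] M)) (πN : ℕ → (N →ₗ[ℂ] N))
    -- the T-grading projections: orthogonal idempotents separating points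
    (hπK : ∀ k j u, πK k (πK j u) = if k = j then πK k u else 0)
    (hπL : ∀ k j x, πL k (πL j x) = if k = j then πL k x else 0)
    (hπM : ∀ k j y, πM k (πM j y) = if k = j then πM k y else 0)
    (hπN : ∀ k j z, πN k (πN j z) = if k = j then πN k z else 0)
    (hsepK : ∀ u : K0, (∀ k, πK k u = 0) → u = 0)
    (hsepL : ∀ x : L, (∀ k, πL k x = 0) → x = 0)
    (hsepM : ∀ y : M, (∀ k, πM k y = 0) → y = 0)
    (hsepN : ∀ z : N, (∀ k, πN k z = 0) → z = 0)
    -- completeness of L: any family of T-homogeneous components is realized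
    (hcompl : ∀ f : ℕ → L, (∀ k, πL k (f k) = f k) → ∃ x : L, ∀ k, πL k x = f k)
    -- the differential, preserving T
    (δ0 : K0 →ₗ[ℂ] L) (δ : L →ₗ[ℂ] M) (δ' : M →ₗ[ℂ] N)
    (hδδ0 : ∀ u, δ (δ0 u) = 0) (hδ'δ : ∀ x, δ' (δ x) = 0)
    (hδ0T : ∀ k u, δ0 (πK k u) = πL k (δ0 u))
    (hδT : ∀ k x, δ (πL k x) = πM k (δ x))
    (hδ'T : ∀ k y, δ' (πM k y) = πN k (δ' y))
    -- the bracket: symmetric on (odd) degree-1 elements, raising T-degree by one,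
    -- computed componentwise
    (br : L →ₗ[ℂ] L →ₗ[ℂ] M) (br2 : M →ₗ[ℂ] L →ₗ[ℂ] N)
    (hbrsymm : ∀ a b, br a b = br b a)
    (hbrT : ∀ (k : ℕ) (a b : L),
      πM k (br a b) = ∑ i ∈ Finset.range k, br (πL i a) (πL (k - 1 - i) b))
    (hbr2T : ∀ (k : ℕ) (y : M) (a : L),
      πN k (br2 y a) = ∑ i ∈ Finset.range k, br2 (πM i y) (πL (k - 1 - i) a))
    -- Leibniz rule and Jacobi identity (in the form needed for odd elements)
    (hLeib : ∀ a b, δ' (br a b) = br2 (δ a) b + br2 (δ b) a)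
    (hJac : ∀ a, br2 (br a a) a = 0)
    -- the homotopy δ⁻¹ : 1 − [δ, δ⁻¹] is the projection P onto harmonics
    (δinv : M →ₗ[ℂ] L) (δinv1 : L →ₗ[ℂ] K0) (P : L →ₗ[ℂ] L)
    (hδinvT : ∀ k y, δinv (πM k y) = πL k (δinv y))
    (hδinv1T : ∀ k x, δinv1 (πL k x) = πK k (δinv1 x))
    (hhom : ∀ x : L, δinv (δ x) + δ0 (δinv1 x) + P x = x)
    (hδinvδinv : ∀ y, δinv1 (δinv y) = 0)
    -- H² vanishes in the relevant bidegree: δ⁻¹ contracts closed degree-2 elements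
    (hH2 : ∀ y : M, δ' y = 0 → δ (δinv y) = y)
    -- the initial element η: T-degree 0, closed, spanning H¹ (the range of P)
    (η : L) (hδη : δ η = 0) (hηT : πL 0 η = η)
    (hPη : P η = η) (hδinv1η : δinv1 η = 0)
    (hPrange : ∀ x, ∃ c : ℂ, P x = c • η)
    (hPT : ∀ (k : ℕ) (x : L), 0 < k → P (πL k x) = 0) :
    ∃! J : L, πL 0 J = η ∧ δ J + (1 / 2 : ℂ) • br J J = 0 ∧ δinv1 J = 0 := by
  classical
  obtain ⟨f, hf0, hfs⟩ : ∃ f : ℕ → L, f 0 = η ∧ ∀ n, f (n+1) =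
      (-(1/2) : ℂ) • δinv (∑ i ∈ Finset.range (n+1), br (f i) (f (n - i))) :=
    ⟨fedosovSeq δinv br η, fedosovSeq_zero _ _ _, fedosovSeq_succ _ _ _⟩
  have homog : ∀ k, πL k (f k) = f k := by
    intro k
    induction k using Nat.strong_induction_on with
    | _ k ih =>
      cases k with
      | zero => rw [hf0]; exact hηT
      | succ n =>
        rw [hfs n, map_smul]
        congr 1
        rw [← hδinvT]
        congr 1
        rw [map_sum]
        refine Finset.sum_congr rfl fun j hj => ?_
        have hj' : j < n + 1 := Finset.mem_range.mp hj
        rw [hbrT]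
        rw [Finset.sum_eq_single j]
        · have e : n + 1 - 1 - j = n - j := by omega
          rw [e, ih j hj', ih (n - j) (by omega)]
        · intro b hb hbj
          have hz : πL b (f j) = 0 := by
            conv_lhs => rw [← ih j hj']
            rw [hπL]
            simp [hbj]
          rw [hz]
          simp
        · intro h; exact absurd hj h
  obtain ⟨J, hJ⟩ := hcompl f homog
  have hbrJ : ∀ n, πM (n+1) (br J J)
      = ∑ i ∈ Finset.range (n+1), br (f i) (f (n - i)) := by
    intro n
    rw [hbrT]
    refine Finset.sum_congr rfl fun i hi => ?_
    have e : n + 1 - 1 - i = n - i := by omega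
    rw [e, hJ, hJ]
  have hbrJ0 : πM 0 (br J J) = 0 := by rw [hbrT]; simp
  have hδJ : ∀ m, πM m (δ J) = δ (f m) := fun m => by rw [← hδT, hJ]
  have hMC : ∀ m, πM m (δ J) + (1/2 : ℂ) • πM m (br J J) = 0 := by
    intro m
    induction m using Nat.strong_induction_on with
    | _ m ih =>
      cases m with
      | zero =>
        rw [hδJ, hf0, hδη, hbrJ0]
        simp
      | succ n =>
        have hX : πN (n+1) (br2 (δ J) J) = 0 := by
          rw [hbr2T]
          have key : ∀ i ∈ Finset.range (n+1),
              br2 (πM i (δ J)) (πL (n + 1 - 1 - i) J)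
                = (-(1/2) : ℂ) • br2 (πM i (br J J)) (πL (n + 1 - 1 - i) J) := by
            intro i hi
            have hi' : i < n + 1 := Finset.mem_range.mp hi
            have h1 : πM i (δ J) = (-(1/2) : ℂ) • πM i (br J J) := by
              have h := eq_neg_of_add_eq_zero_left (ih i hi')
              rw [h, neg_smul]
            rw [h1, map_smul, LinearMap.smul_apply]
          rw [Finset.sum_congr rfl key, ← Finset.smul_sum]
          have h2 : (∑ i ∈ Finset.range (n+1),
              br2 (πM i (br J J)) (πL (n + 1 - 1 - i) J))
              = πN (n+1) (br2 (br J J) J) := (hbr2T _ _ _).symm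
          rw [h2, hJac, map_zero, smul_zero]
        have hδ'S : δ' (∑ i ∈ Finset.range (n+1), br (f i) (f (n - i))) = 0 := by
          rw [← hbrJ n, hδ'T, hLeib, map_add, hX, add_zero]
        have hδf : δ (f (n+1))
            = (-(1/2) : ℂ) • (∑ i ∈ Finset.range (n+1), br (f i) (f (n - i))) := by
          rw [hfs n, map_smul, hH2 _ hδ'S]
        rw [hδJ, hδf, hbrJ, ← add_smul]
        norm_num
  have hMCJ : δ J + (1 / 2 : ℂ) • br J J = 0 := by
    apply hsepM
    intro m
    rw [map_add, map_smul]
    exact hMC m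
  have hδinv1J : δinv1 J = 0 := by
    apply hsepK
    intro k
    rw [← hδinv1T, hJ]
    cases k with
    | zero => rw [hf0]; exact hδinv1η
    | succ n => rw [hfs n, map_smul, hδinvδinv, smul_zero]
  refine ⟨J, ⟨by rw [hJ 0, hf0], hMCJ, hδinv1J⟩, ?_⟩
  rintro J' ⟨hJ'0, hJ'MC, hJ'inv⟩
  have hδJ' : δ J' = -((1 / 2 : ℂ) • br J' J') := eq_neg_of_add_eq_zero_left hJ'MC
  have hcomp : ∀ k, πL k J' = f k := by
    intro k
    induction k using Nat.strong_induction_on with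
    | _ k ih =>
      cases k with
      | zero => rw [hJ'0, hf0]
      | succ n =>
        have h1 : δinv1 (πL (n+1) J') = 0 := by rw [hδinv1T, hJ'inv, map_zero]
        have h3 : δ (πL (n+1) J')
            = (-(1/2) : ℂ) • (∑ i ∈ Finset.range (n+1), br (f i) (f (n - i))) := by
          rw [hδT, hδJ', map_neg, map_smul, hbrT]
          have key : ∀ i ∈ Finset.range (n+1),
              br (πL i J') (πL (n + 1 - 1 - i) J') = br (f i) (f (n - i)) := by
            intro i hi
            have hi' : i < n + 1 := Finset.mem_range.mp hi
            have e : n + 1 - 1 - i = n - i := by omega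
            rw [e, ih i hi', ih (n - i) (by omega)]
          rw [Finset.sum_congr rfl key, neg_smul]
        have h4 := hhom (πL (n+1) J')
        rw [h1, map_zero, hPT (n+1) J' (Nat.succ_pos n), h3, map_smul] at h4
        rw [hfs n, ← h4]
        simp
  rw [← sub_eq_zero]
  apply hsepL
  intro k
  rw [map_sub, hcomp k, hJ k, sub_self]
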